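/- Assume A, B, D have real entries with A = Aᵀ and D = Dᵀ. Let z ∈ ℂ with |z| = 1, and suppose (z+z⁻¹)·1_M − D, Q(z), Q(z⁻¹), γ(z) and γ(z⁻¹) are all invertible. Then for all indices 1 ≤ u, v ≤ M: (Ψ(z)·Ψ(z)†)_{u v} = (z² − 1)(z⁻² − 1) · (γ(z)⁻¹ · P_N · γ(z⁻¹)⁻¹)_{N+u, N+v}. -/

import Mathlib

/-! With `K(w) = (w + w⁻¹)·1 − D`, the identity `z⁻¹ Q(z) − z Q(z⁻¹) = (z⁻¹ − z)·1` gives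
`Ψ(z) = (z⁻¹ − z) K(z)⁻¹ B Q(z)⁻¹`. For `|z| = 1` and Hermitian `A`, `D` the matrix `K(z)` is
Hermitian and `Q(z)† = Q(z⁻¹)`, so `Ψ Ψ† = (z⁻¹ − z)(z − z⁻¹) K⁻¹ B Q(z)⁻¹ Q(z⁻¹)⁻¹ B† K⁻¹`.
On the other side `γ(w) = [[w A − 1, w B†], [w B, −w K(w)]]`, whose Schur complement with respect
to the lower right block is `−Q(w)`; hence the off-diagonal blocks of `γ(w)⁻¹` are
`−K⁻¹ B Q(w)⁻¹` and `−Q(w)⁻¹ B† K⁻¹`. As `P_N` keeps only the upper left block and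
`K(z⁻¹) = K(z)`, the lower right block of `γ(z)⁻¹ P_N γ(z⁻¹)⁻¹` is the same matrix product. -/

open Matrix

/-- `F(z) := A + B† ((z+z⁻¹)·1_M − D)⁻¹ B`. -/
noncomputable def Fmat {N M : ℕ} (A : Matrix (Fin N) (Fin N) ℂ)
    (B : Matrix (Fin M) (Fin N) ℂ) (D : Matrix (Fin M) (Fin M) ℂ) (z : ℂ) :
    Matrix (Fin N) (Fin N) ℂ :=
  A + Bᴴ * ((z + z⁻¹) • (1 : Matrix (Fin M) (Fin M) ℂ) - D)⁻¹ * B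

/-- `Q(z) := 1_N − z·F(z)`. -/
noncomputable def Qmat {N M : ℕ} (A : Matrix (Fin N) (Fin N) ℂ)
    (B : Matrix (Fin M) (Fin N) ℂ) (D : Matrix (Fin M) (Fin M) ℂ) (z : ℂ) :
    Matrix (Fin N) (Fin N) ℂ :=
  1 - z • Fmat A B D z

/-- `𝕊(z) := −Q(z⁻¹)·Q(z)⁻¹`. -/
noncomputable def Smat {N M : ℕ} (A : Matrix (Fin N) (Fin N) ℂ)
    (B : Matrix (Fin M) (Fin N) ℂ) (D : Matrix (Fin M) (Fin M) ℂ) (z : ℂ) :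
    Matrix (Fin N) (Fin N) ℂ :=
  -(Qmat A B D z⁻¹) * (Qmat A B D z)⁻¹

/-- `Ψ(z) := ((z+z⁻¹)·1_M − D)⁻¹·B·(z⁻¹·1_N + z·𝕊(z))`. -/
noncomputable def PsiMat {N M : ℕ} (A : Matrix (Fin N) (Fin N) ℂ)
    (B : Matrix (Fin M) (Fin N) ℂ) (D : Matrix (Fin M) (Fin M) ℂ) (z : ℂ) :
    Matrix (Fin M) (Fin N) ℂ :=
  ((z + z⁻¹) • (1 : Matrix (Fin M) (Fin M) ℂ) - D)⁻¹ * B *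
    (z⁻¹ • (1 : Matrix (Fin N) (Fin N) ℂ) + z • Smat A B D z)

/-- `H_G := [[A, B†],[B, D]]`. -/
def HGmat {N M : ℕ} (A : Matrix (Fin N) (Fin N) ℂ)
    (B : Matrix (Fin M) (Fin N) ℂ) (D : Matrix (Fin M) (Fin M) ℂ) :
    Matrix (Fin N ⊕ Fin M) (Fin N ⊕ Fin M) ℂ :=
  fromBlocks A Bᴴ B D

/-- `P_M`, the diagonal projection onto the last `M` coordinates. -/
def PMmat (N M : ℕ) : Matrix (Fin N ⊕ Fin M) (Fin N ⊕ Fin M) ℂ :=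
  fromBlocks 0 0 0 1

/-- `P_N := 1 − P_M`, the diagonal projection onto the first `N` coordinates. -/
def PNmat (N M : ℕ) : Matrix (Fin N ⊕ Fin M) (Fin N ⊕ Fin M) ℂ :=
  1 - PMmat N M

/-- `γ(z) := −z²·P_M + z·H_G − 1`. -/
noncomputable def gammaMat {N M : ℕ} (A : Matrix (Fin N) (Fin N) ℂ)
    (B : Matrix (Fin M) (Fin N) ℂ) (D : Matrix (Fin M) (Fin M) ℂ) (z : ℂ) :
    Matrix (Fin N ⊕ Fin M) (Fin N ⊕ Fin M) ℂ :=
  -(z ^ 2) • PMmat N M + z • HGmat A B D - 1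

namespace Matrix

variable {m n α : Type*} [Fintype m] [Fintype n] [DecidableEq m] [DecidableEq n] [CommRing α]

theorem inv_fromBlocks_of_isUnit₂₂ (A : Matrix m m α) (B : Matrix m n α) (C : Matrix n m α)
    (D : Matrix n n α) (hD : IsUnit D) (hS : IsUnit (A - B * D⁻¹ * C)) :
    (fromBlocks A B C D)⁻¹ =
      fromBlocks (A - B * D⁻¹ * C)⁻¹ (-((A - B * D⁻¹ * C)⁻¹ * B * D⁻¹))
        (-(D⁻¹ * C * (A - B * D⁻¹ * C)⁻¹)) (D⁻¹ + D⁻¹ * C * (A - B * D⁻¹ * C)⁻¹ * B * D⁻¹) := by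
  let := hD.invertible
  let : Invertible (A - B * ⅟D * C) := by rw [invOf_eq_nonsing_inv]; exact hS.invertible
  let := fromBlocks₂₂Invertible A B C D
  rw [← invOf_eq_nonsing_inv, invOf_fromBlocks₂₂_eq]
  simp only [invOf_eq_nonsing_inv]

theorem inv_neg_of_isUnit {A : Matrix n n α} (hA : IsUnit A) : (-A)⁻¹ = -A⁻¹ :=
  inv_eq_left_inv (by rw [neg_mul_neg, nonsing_inv_mul _ ((isUnit_iff_isUnit_det A).mp hA)])

end Matrix

theorem Matrix.isHermitian_of_transpose_eq_of_im_eq_zero {n : Type*} {A : Matrix n n ℂ}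
    (hsymm : Aᵀ = A) (hreal : ∀ i j, (A i j).im = 0) : A.IsHermitian := by
  ext i j
  rw [conjTranspose_apply, ← transpose_apply A i j, hsymm, RCLike.star_def,
    Complex.conj_eq_iff_im.mpr (hreal i j)]

noncomputable def Kmat {M : ℕ} (D : Matrix (Fin M) (Fin M) ℂ) (w : ℂ) : Matrix (Fin M) (Fin M) ℂ :=
  (w + w⁻¹) • (1 : Matrix (Fin M) (Fin M) ℂ) - D

section ScatteringMatrices

variable {N M : ℕ} (A : Matrix (Fin N) (Fin N) ℂ) (B : Matrix (Fin M) (Fin N) ℂ)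
  (D : Matrix (Fin M) (Fin M) ℂ)

theorem Kmat_inv (w : ℂ) : Kmat D w⁻¹ = Kmat D w := by
  rw [Kmat, Kmat, inv_inv, add_comm]

theorem Fmat_eq (w : ℂ) : Fmat A B D w = A + Bᴴ * (Kmat D w)⁻¹ * B := rfl

theorem Fmat_inv (w : ℂ) : Fmat A B D w⁻¹ = Fmat A B D w := by
  rw [Fmat_eq, Fmat_eq, Kmat_inv]

theorem PsiMat_eq_Kmat (w : ℂ) :
    PsiMat A B D w = (Kmat D w)⁻¹ * B * (w⁻¹ • (1 : Matrix (Fin N) (Fin N) ℂ) + w • Smat A B D w) :=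
  rfl

theorem inv_smul_Qmat_sub_smul_Qmat_inv {z : ℂ} (hz : z ≠ 0) :
    z⁻¹ • Qmat A B D z - z • Qmat A B D z⁻¹ = (z⁻¹ - z) • (1 : Matrix (Fin N) (Fin N) ℂ) := by
  rw [Qmat, Qmat, Fmat_inv, smul_sub, smul_sub, smul_smul, smul_smul, inv_mul_cancel₀ hz,
    mul_inv_cancel₀ hz, sub_smul]
  abel

theorem smul_one_add_smul_Smat {z : ℂ} (hz : z ≠ 0) (hQ : IsUnit (Qmat A B D z)) :
    z⁻¹ • (1 : Matrix (Fin N) (Fin N) ℂ) + z • Smat A B D z = (z⁻¹ - z) • (Qmat A B D z)⁻¹ := by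
  have hQQ : Qmat A B D z * (Qmat A B D z)⁻¹ = 1 :=
    mul_nonsing_inv _ ((isUnit_iff_isUnit_det _).mp hQ)
  calc z⁻¹ • (1 : Matrix (Fin N) (Fin N) ℂ) + z • Smat A B D z
      = (z⁻¹ • Qmat A B D z - z • Qmat A B D z⁻¹) * (Qmat A B D z)⁻¹ := by
        rw [Smat, sub_mul, smul_mul, smul_mul, hQQ, Matrix.neg_mul, smul_neg, sub_eq_add_neg]
    _ = (z⁻¹ - z) • (Qmat A B D z)⁻¹ := by
        rw [inv_smul_Qmat_sub_smul_Qmat_inv A B D hz, smul_mul, Matrix.one_mul]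

theorem PsiMat_eq {z : ℂ} (hz : z ≠ 0) (hQ : IsUnit (Qmat A B D z)) :
    PsiMat A B D z = (z⁻¹ - z) • ((Kmat D z)⁻¹ * B * (Qmat A B D z)⁻¹) := by
  rw [PsiMat_eq_Kmat, smul_one_add_smul_Smat A B D hz hQ, Matrix.mul_smul]

variable {A D}

theorem Kmat_isHermitian (hD : D.IsHermitian) {z : ℂ} (hz : ‖z‖ = 1) : (Kmat D z).IsHermitian := by
  rw [Kmat, IsHermitian, conjTranspose_sub, conjTranspose_smul, conjTranspose_one, hD.eq,
    star_add, RCLike.star_def, Complex.inv_eq_conj hz, Complex.conj_conj, add_comm]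

theorem Fmat_isHermitian (hA : A.IsHermitian) {w : ℂ} (hK : (Kmat D w).IsHermitian) :
    (Fmat A B D w).IsHermitian :=
  hA.add (isHermitian_conjTranspose_mul_mul B hK.inv)

theorem Qmat_conjTranspose (hA : A.IsHermitian) (hD : D.IsHermitian) {z : ℂ} (hz : ‖z‖ = 1) :
    (Qmat A B D z)ᴴ = Qmat A B D z⁻¹ := by
  rw [Qmat, Qmat, conjTranspose_sub, conjTranspose_one, conjTranspose_smul,
    (Fmat_isHermitian B hA (Kmat_isHermitian hD hz)).eq, Fmat_inv, RCLike.star_def,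
    ← Complex.inv_eq_conj hz]

theorem PsiMat_mul_conjTranspose (hA : A.IsHermitian) (hD : D.IsHermitian) {z : ℂ}
    (hz : ‖z‖ = 1) (hQ : IsUnit (Qmat A B D z)) :
    PsiMat A B D z * (PsiMat A B D z)ᴴ = ((z⁻¹ - z) * (z - z⁻¹)) •
      ((Kmat D z)⁻¹ * B * (Qmat A B D z)⁻¹ * (Qmat A B D z⁻¹)⁻¹ * Bᴴ * (Kmat D z)⁻¹) := by
  have hz0 : z ≠ 0 := norm_ne_zero_iff.mp (by rw [hz]; exact one_ne_zero)
  have hstar : star (z⁻¹ - z) = z - z⁻¹ := by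
    rw [star_sub, RCLike.star_def, ← Complex.inv_eq_conj hz, map_inv₀,
      ← Complex.inv_eq_conj hz, inv_inv]
  rw [PsiMat_eq A B D hz0 hQ, conjTranspose_smul, conjTranspose_mul, conjTranspose_mul,
    conjTranspose_nonsing_inv, conjTranspose_nonsing_inv, Qmat_conjTranspose B hA hD hz,
    (Kmat_isHermitian hD hz).eq, hstar, Matrix.smul_mul, Matrix.mul_smul, smul_smul]
  simp only [Matrix.mul_assoc]

end ScatteringMatrices

theorem PNmat_eq_fromBlocks (N M : ℕ) : PNmat N M = fromBlocks 1 0 0 0 := by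
  rw [PNmat, PMmat, ← fromBlocks_one, sub_eq_add_neg, fromBlocks_neg, fromBlocks_add]
  simp only [neg_zero, add_zero, add_neg_cancel]

theorem toBlocks₂₂_mul_PNmat_mul {N M : ℕ} (X Y : Matrix (Fin N ⊕ Fin M) (Fin N ⊕ Fin M) ℂ) :
    (X * PNmat N M * Y).toBlocks₂₂ = X.toBlocks₂₁ * Y.toBlocks₁₂ := by
  rw [← fromBlocks_toBlocks X, ← fromBlocks_toBlocks Y, PNmat_eq_fromBlocks, fromBlocks_multiply,
    fromBlocks_multiply]
  simp

section Gamma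

variable {N M : ℕ} (A : Matrix (Fin N) (Fin N) ℂ) (B : Matrix (Fin M) (Fin N) ℂ)
  (D : Matrix (Fin M) (Fin M) ℂ) {w : ℂ}

theorem gammaMat_eq_fromBlocks (hw : w ≠ 0) :
    gammaMat A B D w = fromBlocks (w • A - 1) (w • Bᴴ) (w • B) (-w • Kmat D w) := by
  rw [gammaMat, PMmat, HGmat, Kmat, ← fromBlocks_one, fromBlocks_smul, fromBlocks_smul,
    fromBlocks_add, sub_eq_add_neg, fromBlocks_neg, fromBlocks_add]
  congr 1
  · simp [sub_eq_add_neg]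
  · simp
  · simp
  · rw [smul_sub, smul_smul, mul_add, neg_mul, neg_mul, mul_inv_cancel₀ hw]
    module

theorem gammaMat_schurComplement (hw : w ≠ 0) (hK : IsUnit (Kmat D w)) :
    (w • A - 1) - w • Bᴴ * (-w • Kmat D w)⁻¹ * (w • B) = -Qmat A B D w := by
  let : Invertible (-w) := invertibleOfNonzero (neg_ne_zero.mpr hw)
  rw [Matrix.inv_smul _ (-w) ((isUnit_iff_isUnit_det _).mp hK), invOf_eq_inv, Qmat, Fmat_eq]
  simp only [Matrix.smul_mul, Matrix.mul_smul, smul_smul, smul_add, Matrix.mul_assoc]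
  rw [inv_neg, neg_mul, inv_mul_cancel₀ hw]
  module

variable {A B D}

theorem inv_gammaMat_eq_fromBlocks (hw : w ≠ 0) (hK : IsUnit (Kmat D w))
    (hQ : IsUnit (Qmat A B D w)) :
    (gammaMat A B D w)⁻¹ = fromBlocks (-(Qmat A B D w)⁻¹)
      (-((Qmat A B D w)⁻¹ * Bᴴ * (Kmat D w)⁻¹)) (-((Kmat D w)⁻¹ * B * (Qmat A B D w)⁻¹))
      (-(w⁻¹ • (Kmat D w)⁻¹) - (Kmat D w)⁻¹ * B * (Qmat A B D w)⁻¹ * Bᴴ * (Kmat D w)⁻¹) := by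
  have hS := gammaMat_schurComplement A B D hw hK
  have hwK : IsUnit (-w • Kmat D w) := by
    simpa only [Units.smul_def, Units.val_mk0] using hK.smul (Units.mk0 (-w) (neg_ne_zero.mpr hw))
  let : Invertible (-w) := invertibleOfNonzero (neg_ne_zero.mpr hw)
  rw [gammaMat_eq_fromBlocks A B D hw,
    inv_fromBlocks_of_isUnit₂₂ _ _ _ _ hwK (hS ▸ hQ.neg), hS,
    inv_neg_of_isUnit hQ, Matrix.inv_smul _ (-w) ((isUnit_iff_isUnit_det _).mp hK), invOf_eq_inv]
  simp only [Matrix.smul_mul, Matrix.mul_smul, Matrix.neg_mul, Matrix.mul_neg, smul_neg, neg_neg,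
    smul_smul, inv_neg, mul_neg, neg_smul, inv_mul_cancel₀ hw, mul_inv_cancel₀ hw, one_smul,
    sub_eq_add_neg]

theorem toBlocks₂₂_inv_gammaMat_mul_PNmat_mul {z : ℂ} (hz : z ≠ 0) (hK : IsUnit (Kmat D z))
    (hQ : IsUnit (Qmat A B D z)) (hQ' : IsUnit (Qmat A B D z⁻¹)) :
    ((gammaMat A B D z)⁻¹ * PNmat N M * (gammaMat A B D z⁻¹)⁻¹).toBlocks₂₂ =
      (Kmat D z)⁻¹ * B * (Qmat A B D z)⁻¹ * (Qmat A B D z⁻¹)⁻¹ * Bᴴ * (Kmat D z)⁻¹ := by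
  have hK' : IsUnit (Kmat D z⁻¹) := by rwa [Kmat_inv]
  rw [toBlocks₂₂_mul_PNmat_mul, inv_gammaMat_eq_fromBlocks hz hK hQ,
    inv_gammaMat_eq_fromBlocks (inv_ne_zero hz) hK' hQ', Kmat_inv, toBlocks_fromBlocks₂₁,
    toBlocks_fromBlocks₁₂]
  simp only [Matrix.neg_mul, Matrix.mul_neg, neg_neg, Matrix.mul_assoc]

end Gamma

theorem PsiPsiDagger_gamma_general {N M : ℕ}
    (A : Matrix (Fin N) (Fin N) ℂ) (B : Matrix (Fin M) (Fin N) ℂ)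
    (D : Matrix (Fin M) (Fin M) ℂ)
    (hAre : ∀ i j, (A i j).im = 0)
    (hDre : ∀ i j, (D i j).im = 0)
    (hAsym : Aᵀ = A) (hDsym : Dᵀ = D)
    (z : ℂ) (habs : ‖z‖ = 1)
    (hD : IsUnit ((z + z⁻¹) • (1 : Matrix (Fin M) (Fin M) ℂ) - D))
    (hQ : IsUnit (Qmat A B D z)) (hQ' : IsUnit (Qmat A B D z⁻¹)) :
    ∀ u v : Fin M,
      (PsiMat A B D z * (PsiMat A B D z)ᴴ) u v =
        (z ^ 2 - 1) * ((z ^ 2)⁻¹ - 1) *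
          (((gammaMat A B D z)⁻¹ * PNmat N M * (gammaMat A B D z⁻¹)⁻¹)
            (Sum.inr u) (Sum.inr v)) := by
  have hz : z ≠ 0 := norm_ne_zero_iff.mp (by rw [habs]; exact one_ne_zero)
  have hPsi := PsiMat_mul_conjTranspose B (isHermitian_of_transpose_eq_of_im_eq_zero hAsym hAre)
    (isHermitian_of_transpose_eq_of_im_eq_zero hDsym hDre) habs hQ
  have hc : (z⁻¹ - z) * (z - z⁻¹) = (z ^ 2 - 1) * ((z ^ 2)⁻¹ - 1) := by
    field_simp
  intro u v
  rw [hPsi, hc, ← toBlocks₂₂_inv_gammaMat_mul_PNmat_mul hz hD hQ hQ']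
  rfl

/-- for real symmetric data and `|z| = 1`, the internal-vertex matrix
elements of `Ψ(z)·Ψ(z)†` equal `(z² − 1)(z⁻² − 1)` times those of
`γ(z)⁻¹·P_N·γ(z⁻¹)⁻¹`. -/
theorem PsiPsiDagger_gamma {N M : ℕ} (hN : 0 < N) (hM : 0 < M)
    (A : Matrix (Fin N) (Fin N) ℂ) (B : Matrix (Fin M) (Fin N) ℂ)
    (D : Matrix (Fin M) (Fin M) ℂ)
    (hAre : ∀ i j, (A i j).im = 0) (hBre : ∀ i j, (B i j).im = 0)
    (hDre : ∀ i j, (D i j).im = 0)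
    (hAsym : Aᵀ = A) (hDsym : Dᵀ = D)
    (z : ℂ) (habs : ‖z‖ = 1)
    (hD : IsUnit ((z + z⁻¹) • (1 : Matrix (Fin M) (Fin M) ℂ) - D))
    (hQ : IsUnit (Qmat A B D z)) (hQ' : IsUnit (Qmat A B D z⁻¹))
    (hγ : IsUnit (gammaMat A B D z)) (hγ' : IsUnit (gammaMat A B D z⁻¹)) :
    ∀ u v : Fin M,
      (PsiMat A B D z * (PsiMat A B D z)ᴴ) u v =
        (z ^ 2 - 1) * ((z ^ 2)⁻¹ - 1) *
          (((gammaMat A B D z)⁻¹ * PNmat N M * (gammaMat A B D z⁻¹)⁻¹)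
            (Sum.inr u) (Sum.inr v)) :=
  PsiPsiDagger_gamma_general A B D hAre hDre hAsym hDsym z habs hD hQ hQ'
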